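/- arXiv:1107.1877 — 2 statements merged into one kernel-verified Lean document; each statement's English description precedes it below -/
import Mathlib

section
/- For the torus link T(2, 4k+2) (the (2, 4k+2)-torus link, i.e., the link denoted 4k+2 in Conway notation), the Jones polynomial factorizes nontrivially as a product of two non-unit Laurent polynomials, even though T(2, 4k+2) is a prime link. In particular, for k = 1 the Jones polynomial of the (2,6)-torus link factorizes. -/
/-! Write `x = t^{1/2}`. Solving the skein recursion gives
`(x² + 1)·x·V(T(2,n)) = (-1)^{n+1}(x^{n+4} + x^{n+2} + x^n) - x^{3n+2}`, and for `n = 4k+2`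
the right-hand side is `-x^{4k+2}(x² + 1)(x⁴ + 1)·h_k` with
`h_k = 1 + Σ_{j<k} (x^{8j+8} - x^{8j+6})`. Hence `V(T(2,4k+2)) = (x⁴ + 1)·(-x^{4k+1}h_k)`.
Neither factor is a unit: the evaluation `x ↦ i` into `ℤ[i]` sends `x⁴ + 1` to `2` and `h_k`
to `2k + 1`, which are not units of `ℤ[i]`. -/

open LaurentPolynomial

/-- The Jones polynomial of the `(2,n)`-torus link `T(2,n)` (the closure of the
2-braid `σ₁ⁿ`; `n` in Conway notation), written in the variable `s = t^{1/2}` (so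
`t = T 2`).  It is computed from the skein relation
`t⁻¹·V(T(2,n)) - t·V(T(2,n-2)) = (t^{1/2} - t^{-1/2})·V(T(2,n-1))`, i.e.
`V(T(2,n)) = t²·V(T(2,n-2)) + (t^{3/2} - t^{1/2})·V(T(2,n-1))`, starting from the
2-component unlink `T(2,0)` with `V = -t^{1/2} - t^{-1/2}` and the unknot `T(2,1)`
with `V = 1`. -/
noncomputable def torusJones : ℕ → LaurentPolynomial ℤ
  | 0 => -T 1 - T (-1)
  | 1 => 1
  | (n + 2) => T 4 * torusJones n + (T 3 - T 1) * torusJones (n + 1)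

open Finset

theorem torusJones_closed_form : ∀ n : ℕ, (T 1 ^ 2 + 1) * T 1 * torusJones n =
    (-1) ^ (n + 1) * (T 1 ^ (n + 4) + T 1 ^ (n + 2) + T 1 ^ n) - T 1 ^ (3 * n + 2)
  | 0 => by
    have h : (T 1 * T (-1) : ℤ[T;T⁻¹]) = 1 := by rw [← T_add]; simp
    rw [torusJones]
    linear_combination (-(T 1 ^ 2 + 1 : ℤ[T;T⁻¹])) * h
  | 1 => by rw [torusJones]; ring
  | n + 2 => by
    have h3 : (T 3 : ℤ[T;T⁻¹]) = T 1 ^ 3 := by simp [T_pow]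
    have h4 : (T 4 : ℤ[T;T⁻¹]) = T 1 ^ 4 := by simp [T_pow]
    rw [torusJones, h3, h4]
    linear_combination T 1 ^ 4 * torusJones_closed_form n +
      (T 1 ^ 3 - T 1) * torusJones_closed_form (n + 1)

section Cofactor

variable {R : Type*} [CommRing R]

def torusCofactor (x : R) (k : ℕ) : R :=
  1 + ∑ j ∈ range k, (x ^ (8 * j + 8) - x ^ (8 * j + 6))

theorem mul_torusCofactor (x : R) (k : ℕ) :
    (x ^ 2 + 1) * (x ^ 4 + 1) * torusCofactor x k = x ^ 4 + x ^ 2 + 1 + x ^ (8 * k + 6) := by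
  induction k with
  | zero => simp only [torusCofactor, range_zero, sum_empty]; ring
  | succ k ih =>
    simp only [torusCofactor, sum_range_succ] at ih ⊢
    linear_combination ih

theorem map_torusCofactor {S : Type*} [CommRing S] (φ : R →+* S) (x : R) (k : ℕ) :
    φ (torusCofactor x k) = torusCofactor (φ x) k := by
  simp [torusCofactor]

theorem torusCofactor_of_sq_eq_neg_one {x : R} (hx : x ^ 2 = -1) (k : ℕ) :
    torusCofactor x k = 2 * k + 1 := by
  have hterm (j : ℕ) : x ^ (8 * j + 8) - x ^ (8 * j + 6) = 2 := by
    rw [show 8 * j + 8 = 2 * (4 * j + 4) by ring, show 8 * j + 6 = 2 * (4 * j + 3) by ring,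
      pow_mul, pow_mul, hx, Even.neg_one_pow ⟨2 * j + 2, by ring⟩,
      Odd.neg_one_pow ⟨2 * j + 1, by ring⟩]
    norm_num
  simp only [torusCofactor, hterm, sum_const, card_range, nsmul_eq_mul]
  ring

end Cofactor

theorem torusJones_four_mul_add_two (k : ℕ) :
    torusJones (4 * k + 2) = (T 1 ^ 4 + 1) * (-T 1 ^ (4 * k + 1) * torusCofactor (T 1) k) := by
  have hne : (T 1 ^ 2 + 1 : ℤ[T;T⁻¹]) * T 1 ≠ 0 := by
    refine mul_ne_zero (fun h => ?_) (isUnit_T 1).ne_zero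
    simpa using congrArg (eval₂ (RingHom.id ℤ) 1) h
  refine mul_left_cancel₀ hne ?_
  have hclosed := torusJones_closed_form (4 * k + 2)
  rw [Odd.neg_one_pow (α := ℤ[T;T⁻¹]) ⟨2 * k + 1, by ring⟩] at hclosed
  linear_combination hclosed + T 1 ^ (4 * k + 2) * mul_torusCofactor (T 1 : ℤ[T;T⁻¹]) k

theorem Zsqrtd.isUnit_intCast_iff {d : ℤ} (n : ℤ) : IsUnit (n : ℤ√d) ↔ IsUnit n := by
  rw [Zsqrtd.isUnit_iff_norm_isUnit, Zsqrtd.norm_intCast, IsUnit.mul_iff, and_self]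

def GaussianInt.unitI : GaussianIntˣ where
  val := Zsqrtd.sqrtd
  inv := -Zsqrtd.sqrtd
  val_inv := by rw [mul_neg, Zsqrtd.dmuld]; rfl
  inv_val := by rw [neg_mul, Zsqrtd.dmuld]; rfl

noncomputable def evalAtI : ℤ[T;T⁻¹] →+* GaussianInt :=
  eval₂ (Int.castRingHom _) GaussianInt.unitI

theorem evalAtI_T_one_sq : evalAtI (T 1) ^ 2 = -1 := by
  simp [evalAtI, GaussianInt.unitI, sq, Zsqrtd.dmuld]

theorem not_isUnit_of_evalAtI_eq_intCast {p : ℤ[T;T⁻¹]} {n : ℤ} (hp : evalAtI p = n)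
    (hn : ¬IsUnit n) : ¬IsUnit p :=
  fun hunit => hn ((Zsqrtd.isUnit_intCast_iff n).mp (hp ▸ hunit.map evalAtI))

theorem not_isUnit_T_one_pow_four_add_one : ¬IsUnit (T 1 ^ 4 + 1 : ℤ[T;T⁻¹]) := by
  refine not_isUnit_of_evalAtI_eq_intCast (n := 2) ?_ (by decide)
  rw [map_add, map_one, map_pow, show 4 = 2 * 2 from rfl, pow_mul, evalAtI_T_one_sq]
  norm_num

theorem not_isUnit_torusCofactor {k : ℕ} (hk : 1 ≤ k) :
    ¬IsUnit (torusCofactor (T 1 : ℤ[T;T⁻¹]) k) := by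
  refine not_isUnit_of_evalAtI_eq_intCast (n := 2 * k + 1) ?_ ?_
  · rw [map_torusCofactor, torusCofactor_of_sq_eq_neg_one evalAtI_T_one_sq]
    push_cast; ring
  · rw [Int.isUnit_iff]; omega

/-- For every `k ≥ 1` the Jones polynomial of the 2-component prime torus link
`T(2, 4k+2)` (the link family `6, 10, …, 4k+2`) factorizes nontrivially as a product
of two Laurent polynomials neither of which is a unit `±tᵏ`; in particular this holds
for `k = 1`, the `(2,6)`-torus link. -/
theorem torus_jones_factorizes :
    (∀ k : ℕ, 1 ≤ k → ∃ f g : LaurentPolynomial ℤ,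
      torusJones (4 * k + 2) = f * g ∧ ¬ IsUnit f ∧ ¬ IsUnit g) ∧
    (∃ f g : LaurentPolynomial ℤ,
      torusJones 6 = f * g ∧ ¬ IsUnit f ∧ ¬ IsUnit g) := by
  have family : ∀ k : ℕ, 1 ≤ k → ∃ f g : LaurentPolynomial ℤ,
      torusJones (4 * k + 2) = f * g ∧ ¬ IsUnit f ∧ ¬ IsUnit g := fun k hk =>
    ⟨_, _, torusJones_four_mul_add_two k, not_isUnit_T_one_pow_four_add_one, fun h =>
      not_isUnit_torusCofactor hk (IsUnit.mul_iff.mp h).2⟩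
  exact ⟨family, family 1 le_rfl⟩
end

section
/- The Tutte polynomial of a connected matroid is irreducible in ℤ[x, y] (Brylawski's theorem). In particular, the Tutte polynomial of a 2-connected graph is irreducible. -/
open MvPolynomial

/-- The Tutte polynomial of a matroid with finite ground set `E` and rank function `r`:
`T_M(x, y) = Σ_{A ⊆ E} (x-1)^{r(E) - r(A)} (y-1)^{|A| - r(A)}`, as an element of
`ℤ[x, y] = MvPolynomial (Fin 2) ℤ` (with `x = X 0`, `y = X 1`). -/
noncomputable def tuttePoly {α : Type} [DecidableEq α] (E : Finset α) (r : Finset α → ℕ) :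
    MvPolynomial (Fin 2) ℤ :=
  ∑ A ∈ E.powerset, (X 0 - 1) ^ (r E - r A) * (X 1 - 1) ^ (A.card - r A)

/-- A matroid (given by its rank function on a finite ground set) is connected if it is
not the direct sum of two matroids on nonempty ground sets. -/
def MatroidConnected {α : Type} [DecidableEq α] (E : Finset α) (r : Finset α → ℕ) : Prop :=
  ¬ ∃ E₁ E₂ : Finset α, E₁ ∪ E₂ = E ∧ Disjoint E₁ E₂ ∧ E₁.Nonempty ∧ E₂.Nonempty ∧
      ∀ A ⊆ E, r A = r (A ∩ E₁) + r (A ∩ E₂)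

/-!
Connectedness with `|E| ≥ 2` rules out loops and coloops, so `T = T_M` has degree `r(E)` in `x`
and `|E| - r(E)` in `y`. On the hyperbola `(x - 1) (y - 1) = 1` the Tutte polynomial collapses:
`(X - 1) ^ (|E| - r(E)) * T(X, X / (X - 1)) = X ^ |E|`. Clearing denominators in the same way in a
factorisation `T = f g` factors `X ^ |E|` into polynomials of degrees at most
`deg_x f + deg_y f` and `deg_x g + deg_y g`. These bounds add up to `|E|`, so a factor that is not
a unit has an image of positive degree, which vanishes at `0`; hence the factor vanishes at the
origin. If neither factor is a unit, the coefficient of `x` in `f g` is therefore zero. But this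
coefficient is Crapo's beta invariant, which is positive for connected matroids: by
deletion–contraction `β(M) = β(M \ e) + β(M / e)`, and by Tutte's lemma one of the two minors is
again connected.
-/

theorem MvPolynomial.eq_C_of_degreeOf_eq_zero {σ R : Type*} [CommSemiring R]
    {p : MvPolynomial σ R} (h : ∀ i, degreeOf i p = 0) : p = C (constantCoeff p) := by
  rw [constantCoeff_eq]
  exact totalDegree_eq_zero_iff_eq_C.1 <| (totalDegree_eq_zero_iff (p := p)).2 fun d hd i =>
    Nat.le_zero.1 (h i ▸ monomial_le_degreeOf i hd)

theorem Polynomial.eval_zero_eq_zero_of_dvd_X_pow {R : Type*} [CommRing R] [IsDomain R]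
    {P : Polynomial R} {n : ℕ} (hP : P ∣ X ^ n) (hdeg : P.natDegree ≠ 0) : P.eval 0 = 0 := by
  obtain ⟨i, -, hi⟩ := (dvd_prime_pow Polynomial.prime_X n).1 hP
  rcases Nat.eq_zero_or_pos i with rfl | hpos
  · exact absurd (natDegree_eq_zero_of_isUnit (associated_one_iff_isUnit.1 (by simpa using hi)))
      hdeg
  · rw [← coeff_zero_eq_eval_zero, ← X_dvd_iff]
    exact (dvd_pow_self X hpos.ne').trans hi.symm.dvd

theorem Polynomial.isUnit_of_C_dvd_X_pow {R : Type*} [CommSemiring R] {c : R} {n : ℕ}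
    (h : C c ∣ (X ^ n : Polynomial R)) : IsUnit c :=
  isUnit_of_dvd_one (by simpa using (C_dvd_iff_dvd_coeff c _).1 h n)

section Degrees

variable {R σ ι : Type*} [CommRing R]

theorem degreeOf_X_sub_one_self [Nontrivial R] (i : σ) :
    degreeOf i (X i - 1 : MvPolynomial σ R) = 1 := by
  rw [sub_eq_add_neg, degreeOf_add_eq_of_degreeOf_lt] <;> simp

theorem degreeOf_X_sub_one_of_ne {i j : σ} (h : i ≠ j) :
    degreeOf i (X j - 1 : MvPolynomial σ R) = 0 :=
  Nat.le_zero.1 <| (degreeOf_sub_le i _ _).trans <| by simp [degreeOf_X_of_ne h]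

theorem X_sub_one_ne_zero [Nontrivial R] (i : σ) : (X i - 1 : MvPolynomial σ R) ≠ 0 :=
  fun h => by simpa [h] using degreeOf_X_sub_one_self (R := R) i

theorem degreeOf_X_sub_one_pow_mul [IsDomain R] {i j : σ} (h : i ≠ j) (a b : ℕ) :
    degreeOf i ((X i - 1 : MvPolynomial σ R) ^ a * (X j - 1) ^ b) = a := by
  rw [degreeOf_mul_eq (pow_ne_zero _ (X_sub_one_ne_zero i)) (pow_ne_zero _ (X_sub_one_ne_zero j)),
    degreeOf_pow_eq _ _ _ (X_sub_one_ne_zero i), degreeOf_pow_eq _ _ _ (X_sub_one_ne_zero j),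
    degreeOf_X_sub_one_self, degreeOf_X_sub_one_of_ne h]
  ring

theorem degreeOf_sum_X_sub_one_pow_mul [IsDomain R] {i j : σ} (h : i ≠ j) {s : Finset ι}
    (a b : ι → ℕ) {k₀ : ι} (hk₀ : k₀ ∈ s) (ha : ∀ k ∈ s, k ≠ k₀ → a k < a k₀) :
    degreeOf i (∑ k ∈ s, (X i - 1 : MvPolynomial σ R) ^ a k * (X j - 1) ^ b k) = a k₀ := by
  classical
  rw [← Finset.add_sum_erase s _ hk₀]
  obtain hs | ⟨k, hk⟩ := (s.erase k₀).eq_empty_or_nonempty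
  · rw [hs, Finset.sum_empty, add_zero, degreeOf_X_sub_one_pow_mul h]
  have hpos : 0 < a k₀ := (Nat.zero_le _).trans_lt
    (ha k (Finset.mem_of_mem_erase hk) (Finset.ne_of_mem_erase hk))
  rw [degreeOf_add_eq_of_degreeOf_lt] <;> rw [degreeOf_X_sub_one_pow_mul h]
  refine (degreeOf_sum_le _ _ _).trans_lt ((Finset.sup_lt_iff hpos).2 fun k hk => ?_)
  rw [degreeOf_X_sub_one_pow_mul h]
  exact ha k (Finset.mem_of_mem_erase hk) (Finset.ne_of_mem_erase hk)

end Degrees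

section Hyperbola

variable {R : Type*} [CommRing R]

/-- `(X - 1) ^ m * p (X, X / (X - 1))`, a polynomial as soon as `m ≥ deg_y p`. -/
noncomputable def hyperbolaPoly (m : ℕ) (p : MvPolynomial (Fin 2) R) : Polynomial R :=
  ∑ d ∈ p.support,
    Polynomial.C (p.coeff d) * Polynomial.X ^ (d 0 + d 1) * (Polynomial.X - 1) ^ (m - d 1)

theorem natDegree_hyperbolaPoly_le {m : ℕ} {p : MvPolynomial (Fin 2) R} (hm : degreeOf 1 p ≤ m) :
    (hyperbolaPoly m p).natDegree ≤ degreeOf 0 p + m := by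
  refine Polynomial.natDegree_sum_le_of_forall_le _ _ fun d hd => ?_
  have := monomial_le_degreeOf 0 hd
  have := (monomial_le_degreeOf 1 hd).trans hm
  compute_degree
  omega

theorem eval_zero_hyperbolaPoly (m : ℕ) (p : MvPolynomial (Fin 2) R) :
    (hyperbolaPoly m p).eval 0 = (-1) ^ m * constantCoeff p := by
  rw [hyperbolaPoly, Polynomial.eval_finsetSum, Finset.sum_eq_single 0]
  · simp [constantCoeff_eq, mul_comm]
  · intro d _ hd
    have : d 0 + d 1 ≠ 0 := fun h => hd (by ext i; fin_cases i <;> simp <;> omega)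
    simp only [Polynomial.eval_mul, Polynomial.eval_pow, Polynomial.eval_X, zero_pow this,
      mul_zero, zero_mul]
  · intro h
    simp [notMem_support_iff.1 h]

/-- The parametrisation `x = X`, `y = X / (X - 1)` of the hyperbola `(x - 1) (y - 1) = 1`. -/
noncomputable def hyperbolaEval [IsDomain R] : MvPolynomial (Fin 2) R →+* RatFunc R :=
  eval₂Hom (algebraMap R (RatFunc R)) ![RatFunc.X, RatFunc.X / (RatFunc.X - 1)]

theorem RatFunc.X_sub_one_ne_zero [IsDomain R] : (RatFunc.X - 1 : RatFunc R) ≠ 0 := by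
  rw [← RatFunc.algebraMap_X, ← map_one (algebraMap (Polynomial R) (RatFunc R)), ← map_sub]
  exact (map_ne_zero_iff _ (RatFunc.algebraMap_injective R)).2 (Polynomial.X_sub_C_ne_zero 1)

theorem algebraMap_hyperbolaPoly [IsDomain R] {m : ℕ} {p : MvPolynomial (Fin 2) R}
    (hm : degreeOf 1 p ≤ m) :
    algebraMap (Polynomial R) (RatFunc R) (hyperbolaPoly m p) =
      (RatFunc.X - 1) ^ m * hyperbolaEval p := by
  rw [hyperbolaPoly, hyperbolaEval, coe_eval₂Hom, eval₂_eq', map_sum, Finset.mul_sum]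
  refine Finset.sum_congr rfl fun d hd => ?_
  obtain ⟨k, rfl⟩ := Nat.exists_eq_add_of_le' ((monomial_le_degreeOf 1 hd).trans hm)
  have := RatFunc.X_sub_one_ne_zero (R := R)
  simp only [Fin.prod_univ_two, Matrix.cons_val_zero, Matrix.cons_val_one, Nat.add_sub_cancel,
    map_mul, map_pow, map_sub, map_one, RatFunc.algebraMap_X, RatFunc.algebraMap_C,
    RatFunc.algebraMap_eq_C, div_pow, pow_add]
  field_simp

theorem hyperbolaPoly_mul [IsDomain R] {m n : ℕ} {f g : MvPolynomial (Fin 2) R}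
    (hf : degreeOf 1 f ≤ m) (hg : degreeOf 1 g ≤ n) :
    hyperbolaPoly (m + n) (f * g) = hyperbolaPoly m f * hyperbolaPoly n g := by
  apply RatFunc.algebraMap_injective R
  rw [map_mul, algebraMap_hyperbolaPoly hf, algebraMap_hyperbolaPoly hg,
    algebraMap_hyperbolaPoly ((degreeOf_mul_le 1 f g).trans (add_le_add hf hg)), map_mul]
  ring

theorem constantCoeff_eq_zero_of_hyperbolaPoly_eq_X_pow [IsDomain R]
    {p f g : MvPolynomial (Fin 2) R}
    (hp : hyperbolaPoly (degreeOf 1 p) p = Polynomial.X ^ (degreeOf 0 p + degreeOf 1 p))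
    (hfg : p = f * g) (hf : ¬IsUnit f) : constantCoeff f = 0 := by
  have hp0 : p ≠ 0 := by
    rintro rfl
    simp [hyperbolaPoly] at hp
  have hf0 : f ≠ 0 := by rintro rfl; exact hp0 (by simpa using hfg)
  have hg0 : g ≠ 0 := by rintro rfl; exact hp0 (by simpa using hfg)
  set F := hyperbolaPoly (degreeOf 1 f) f
  set G := hyperbolaPoly (degreeOf 1 g) g
  have hFG : F * G = Polynomial.X ^ (degreeOf 0 p + degreeOf 1 p) := by
    rw [← hyperbolaPoly_mul le_rfl le_rfl, ← degreeOf_mul_eq hf0 hg0, ← hfg, hp]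
  have hFG0 : F * G ≠ 0 := hFG ▸ pow_ne_zero _ Polynomial.X_ne_zero
  have hdeg := congrArg Polynomial.natDegree hFG
  rw [Polynomial.natDegree_X_pow, Polynomial.natDegree_mul (left_ne_zero_of_mul hFG0)
    (right_ne_zero_of_mul hFG0), hfg, degreeOf_mul_eq hf0 hg0, degreeOf_mul_eq hf0 hg0] at hdeg
  have hF : F.natDegree ≤ degreeOf 0 f + degreeOf 1 f := natDegree_hyperbolaPoly_le le_rfl
  have hG : G.natDegree ≤ degreeOf 0 g + degreeOf 1 g := natDegree_hyperbolaPoly_le le_rfl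
  have hFdvd : F ∣ Polynomial.X ^ (degreeOf 0 p + degreeOf 1 p) := Dvd.intro G hFG
  -- `hdeg`, `hF` and `hG` force `F.natDegree = degreeOf 0 f + degreeOf 1 f`
  by_cases hconst : degreeOf 0 f + degreeOf 1 f = 0
  · have hFC : F = Polynomial.C (constantCoeff f) := by
      rw [Polynomial.eq_C_of_natDegree_eq_zero (p := F) (by omega),
        Polynomial.coeff_zero_eq_eval_zero, eval_zero_hyperbolaPoly,
        show degreeOf 1 f = 0 by omega, pow_zero, one_mul]
    refine absurd ?_ hf
    rw [eq_C_of_degreeOf_eq_zero (p := f) (Fin.forall_fin_two.2 ⟨by omega, by omega⟩)]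
    exact (Polynomial.isUnit_of_C_dvd_X_pow (hFC ▸ hFdvd)).map C
  · have := Polynomial.eval_zero_eq_zero_of_dvd_X_pow hFdvd (by omega)
    rw [eval_zero_hyperbolaPoly] at this
    exact (mul_eq_zero.1 this).resolve_left (pow_ne_zero _ (neg_ne_zero.2 one_ne_zero))

end Hyperbola

section RankFunction

variable {α : Type} [DecidableEq α] {r : Finset α → ℕ} {A B : Finset α}

structure IsRankFunction (r : Finset α → ℕ) : Prop where
  empty : r ∅ = 0
  le_card : ∀ A, r A ≤ A.card
  mono : ∀ ⦃A B⦄, A ⊆ B → r A ≤ r B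
  submod : ∀ A B, r (A ∪ B) + r (A ∩ B) ≤ r A + r B

/-- The rank function of `M / e`; subtracting `r {e}` rather than `1` makes this correct also
when `e` is a loop. -/
def contractRank (r : Finset α → ℕ) (e : α) (A : Finset α) : ℕ :=
  r (insert e A) - r {e}

namespace IsRankFunction

theorem rank_union_le (hr : IsRankFunction r) (A B : Finset α) : r (A ∪ B) ≤ r A + r B :=
  (Nat.le_add_right _ _).trans (hr.submod A B)

theorem rank_singleton_le (hr : IsRankFunction r) (e : α) : r {e} ≤ 1 := by
  simpa using hr.le_card {e}

theorem rank_insert_le (hr : IsRankFunction r) (e : α) (A : Finset α) :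
    r (insert e A) ≤ r {e} + r A := by
  rw [Finset.insert_eq]
  exact hr.rank_union_le _ _

theorem rank_singleton_le_rank_insert (hr : IsRankFunction r) (e : α) (A : Finset α) :
    r {e} ≤ r (insert e A) :=
  hr.mono (Finset.singleton_subset_iff.2 (Finset.mem_insert_self e A))

theorem rank_add_card_le (hr : IsRankFunction r) (hAB : A ⊆ B) :
    r B + A.card ≤ r A + B.card := by
  have hB := hr.rank_union_le A (B \ A)
  rw [Finset.union_sdiff_of_subset hAB] at hB
  have := hr.le_card (B \ A)
  have := Finset.card_sdiff_add_card_eq_card hAB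
  omega

protected theorem contractRank (hr : IsRankFunction r) (e : α) :
    IsRankFunction (contractRank r e) where
  empty := by simp [contractRank]
  le_card A := by
    have := hr.rank_insert_le e A
    have := hr.le_card A
    simp only [contractRank]
    omega
  mono A B hAB := Nat.sub_le_sub_right (hr.mono (Finset.insert_subset_insert e hAB)) _
  submod A B := by
    have := hr.submod (insert e A) (insert e B)
    rw [← Finset.insert_union_distrib, ← Finset.insert_inter_distrib] at this
    have := hr.rank_singleton_le_rank_insert e (A ∪ B)
    have := hr.rank_singleton_le_rank_insert e (A ∩ B)
    have := hr.rank_singleton_le_rank_insert e A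
    have := hr.rank_singleton_le_rank_insert e B
    simp only [contractRank]
    omega

end IsRankFunction

end RankFunction

section Connectivity

variable {α : Type} [DecidableEq α] {r : Finset α → ℕ} {E s A B C : Finset α} {e : α}

theorem IsRankFunction.rank_eq_add_of_rank_eq_add (hr : IsRankFunction r) (hA : A ⊆ E)
    (hE : r E = r A + r (E \ A)) (hB : B ⊆ E) : r B = r (B ∩ A) + r (B ∩ (E \ A)) := by
  have hle : r B ≤ r (B ∩ A) + r (B ∩ (E \ A)) := by
    have := hr.rank_union_le (B ∩ A) (B ∩ (E \ A))
    rwa [← Finset.inter_union_distrib_left, Finset.union_sdiff_of_subset hA,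
      Finset.inter_eq_left.2 hB] at this
  have h₁ := hr.submod B A
  have h₂ := hr.submod (B ∪ A) (E \ A)
  rw [show B ∪ A ∪ E \ A = E by grind, show (B ∪ A) ∩ (E \ A) = B ∩ (E \ A) by grind] at h₂
  omega

theorem matroidConnected_iff (hr : IsRankFunction r) :
    MatroidConnected E r ↔
      ∀ A ⊆ E, A.Nonempty → (E \ A).Nonempty → r E < r A + r (E \ A) := by
  refine ⟨fun hc A hA hA₁ hA₂ => ?_, fun h ⟨E₁, E₂, hE, hdisj, hE₁, hE₂, hsplit⟩ => ?_⟩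
  · by_contra! hle
    have hge := hr.rank_union_le A (E \ A)
    rw [Finset.union_sdiff_of_subset hA] at hge
    exact hc ⟨A, E \ A, Finset.union_sdiff_of_subset hA, Finset.disjoint_sdiff, hA₁, hA₂,
      fun B hB => hr.rank_eq_add_of_rank_eq_add hA (by omega) hB⟩
  · have hcompl : E \ E₁ = E₂ := hE ▸ Finset.union_sdiff_cancel_left hdisj
    have := hsplit E subset_rfl
    rw [Finset.inter_eq_right.2 (hE ▸ Finset.subset_union_left),
      Finset.inter_eq_right.2 (hE ▸ Finset.subset_union_right)] at this
    have := h E₁ (hE ▸ Finset.subset_union_left) hE₁ (hcompl ▸ hE₂)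
    rw [hcompl] at this
    omega

theorem MatroidConnected.rank_lt_rank_singleton_add_rank_erase (hc : MatroidConnected E r)
    (hr : IsRankFunction r) (hE : 2 ≤ E.card) (he : e ∈ E) :
    r E < r {e} + r (E.erase e) := by
  have hne : (E.erase e).Nonempty := by
    rw [← Finset.card_pos, Finset.card_erase_of_mem he]
    omega
  rw [← Finset.sdiff_singleton_eq_erase] at hne ⊢
  exact (matroidConnected_iff hr).1 hc {e} (Finset.singleton_subset_iff.2 he)
    (Finset.singleton_nonempty e) hne

theorem MatroidConnected.rank_singleton (hc : MatroidConnected E r) (hr : IsRankFunction r)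
    (hE : 2 ≤ E.card) (he : e ∈ E) : r {e} = 1 := by
  have := hc.rank_lt_rank_singleton_add_rank_erase hr hE he
  have := hr.rank_singleton_le e
  have := hr.mono (Finset.erase_subset e E)
  omega

theorem MatroidConnected.rank_erase (hc : MatroidConnected E r) (hr : IsRankFunction r)
    (hE : 2 ≤ E.card) (he : e ∈ E) : r (E.erase e) = r E := by
  have := hc.rank_lt_rank_singleton_add_rank_erase hr hE he
  have := hr.rank_singleton_le e
  have := hr.mono (Finset.erase_subset e E)
  omega

/-- A separation `A` of the deletion `M \ e` and a separation `C` of the contraction `M / e`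
cannot cross. -/
theorem MatroidConnected.disjoint_or_subset_union_of_separations
    (hc : MatroidConnected (insert e s) r) (hr : IsRankFunction r) (he : e ∉ s)
    (hA : A ⊆ s) (hC : C ⊆ s) (hdel : r A + r (s \ A) ≤ r s)
    (hcon : r (insert e C) + r (insert e (s \ C)) ≤ r (insert e s) + 1) :
    Disjoint A C ∨ s ⊆ A ∪ C := by
  by_contra! h
  obtain ⟨hAC, hs⟩ := h
  have hX : (A ∩ C).Nonempty := Finset.not_disjoint_iff_nonempty_inter.1 hAC
  have hY : (s \ (A ∪ C)).Nonempty := Finset.sdiff_nonempty.2 hs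
  have hsep := (matroidConnected_iff hr).1 hc
  have h₁ := hsep (A ∩ C) (by grind) hX ⟨e, by grind⟩
  have h₂ := hsep (s \ (A ∪ C)) (by grind) hY ⟨e, by grind⟩
  have s₁ := hr.submod A (insert e C)
  have s₂ := hr.submod (s \ A) (insert e (s \ C))
  rw [show A ∪ insert e C = insert e s \ (s \ (A ∪ C)) by ext; grind,
    show A ∩ insert e C = A ∩ C by ext; grind] at s₁
  rw [show s \ A ∪ insert e (s \ C) = insert e s \ (A ∩ C) by ext; grind,
    show s \ A ∩ insert e (s \ C) = s \ (A ∪ C) by ext; grind] at s₂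
  have := hr.mono (Finset.subset_insert e s)
  omega

theorem MatroidConnected.delete_or_contract (hc : MatroidConnected (insert e s) r)
    (hr : IsRankFunction r) (he : e ∉ s) :
    MatroidConnected s r ∨ MatroidConnected s (contractRank r e) := by
  simp only [matroidConnected_iff hr, matroidConnected_iff (hr.contractRank e)]
  by_contra! h
  obtain ⟨⟨A, hA, hA₁, hA₂, hdel⟩, ⟨C, hC, hC₁, hC₂, hcon⟩⟩ := h
  have hcon' : r (insert e C) + r (insert e (s \ C)) ≤ r (insert e s) + 1 := by
    have := hr.rank_singleton_le e
    have := hr.rank_singleton_le_rank_insert e C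
    have := hr.rank_singleton_le_rank_insert e (s \ C)
    have := hr.rank_singleton_le_rank_insert e s
    simp only [contractRank] at hcon
    omega
  have h₁ := hc.disjoint_or_subset_union_of_separations hr he hA hC hdel hcon'
  have h₂ := hc.disjoint_or_subset_union_of_separations (C := s \ C) hr he hA
    Finset.sdiff_subset hdel
    (by rw [Finset.sdiff_sdiff_eq_self hC]; omega)
  clear hc hdel hcon hcon'
  obtain ⟨a, ha⟩ := hA₁
  obtain ⟨b, hb⟩ := hA₂
  obtain ⟨c, hc⟩ := hC₁
  obtain ⟨d, hd⟩ := hC₂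
  rcases h₁ with h₁ | h₁ <;> rcases h₂ with h₂ | h₂ <;> grind [Finset.disjoint_left]

end Connectivity

section TuttePolynomial

variable {α : Type} [DecidableEq α] {r : Finset α → ℕ} {E s : Finset α} {e : α}

theorem tuttePoly_congr {r' : Finset α → ℕ} (h : ∀ A ⊆ E, r A = r' A) :
    tuttePoly E r = tuttePoly E r' :=
  Finset.sum_congr rfl fun A hA => by rw [h E subset_rfl, h A (Finset.mem_powerset.1 hA)]

@[simp]
theorem tuttePoly_empty (r : Finset α → ℕ) : tuttePoly ∅ r = 1 := by
  simp [tuttePoly]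

theorem tuttePoly_insert (hr : IsRankFunction r) (he : e ∉ s) :
    tuttePoly (insert e s) r =
      (X 0 - 1) ^ (r (insert e s) - r s) * tuttePoly s r +
        (X 1 - 1) ^ (1 - r {e}) * tuttePoly s (contractRank r e) := by
  rw [tuttePoly, Finset.sum_powerset_insert he, tuttePoly, tuttePoly, Finset.mul_sum,
    Finset.mul_sum]
  congr 1 <;> refine Finset.sum_congr rfl fun A hA => ?_ <;>
    have hAs := Finset.mem_powerset.1 hA
  · have := hr.mono hAs
    have := hr.mono (Finset.subset_insert e s)
    rw [show r (insert e s) - r A = (r (insert e s) - r s) + (r s - r A) by omega, pow_add,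
      mul_assoc]
  · have := hr.rank_singleton_le e
    have := hr.rank_insert_le e A
    have := hr.rank_singleton_le_rank_insert e A
    have := hr.le_card A
    simp only [contractRank, Finset.card_insert_of_notMem fun h => he (hAs h)]
    rw [show r (insert e s) - r {e} - (r (insert e A) - r {e}) = r (insert e s) - r (insert e A)
        by omega,
      show A.card + 1 - r (insert e A) = (1 - r {e}) + (A.card - (r (insert e A) - r {e}))
        by omega, pow_add]
    ring

theorem tuttePoly_insert_of_loop (hr : IsRankFunction r) (he : e ∉ s) (hloop : r {e} = 0) :
    tuttePoly (insert e s) r = X 1 * tuttePoly s r := by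
  have hins (A : Finset α) : r (insert e A) = r A :=
    le_antisymm (by simpa [hloop] using hr.rank_insert_le e A) (hr.mono (Finset.subset_insert e A))
  have hcontr : contractRank r e = r := funext fun A => by simp [contractRank, hins, hloop]
  rw [tuttePoly_insert hr he, hins, hcontr, hloop, Nat.sub_self, pow_zero]
  ring

theorem tuttePoly_insert_of_coloop (hr : IsRankFunction r) (he : e ∉ s)
    (hcoloop : r (insert e s) = r s + 1) :
    tuttePoly (insert e s) r = X 0 * tuttePoly s r := by
  have hnotloop : r {e} = 1 := by
    have := hr.rank_insert_le e s
    have := hr.rank_singleton_le e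
    omega
  have hcontr : ∀ A ⊆ s, contractRank r e A = r A := fun A hA => by
    have := hr.submod (insert e A) s
    rw [Finset.insert_union, Finset.union_eq_right.2 hA, Finset.insert_inter_of_notMem he,
      Finset.inter_eq_left.2 hA] at this
    have := hr.rank_insert_le e A
    simp only [contractRank]
    omega
  rw [tuttePoly_insert hr he, hcoloop, hnotloop, tuttePoly_congr hcontr, Nat.add_sub_cancel_left]
  ring

theorem tuttePoly_insert_eq_add (hr : IsRankFunction r) (he : e ∉ s) (hnotloop : r {e} = 1)
    (hnotcoloop : r (insert e s) = r s) :
    tuttePoly (insert e s) r = tuttePoly s r + tuttePoly s (contractRank r e) := by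
  simp [tuttePoly_insert hr he, hnotloop, hnotcoloop]

theorem constantCoeff_tuttePoly (hr : IsRankFunction r) (hE : E.Nonempty) :
    constantCoeff (tuttePoly E r) = 0 := by
  have hterm : ∀ A ∈ E.powerset,
      constantCoeff ((X 0 - 1) ^ (r E - r A) * (X 1 - 1) ^ (A.card - r A) :
        MvPolynomial (Fin 2) ℤ) = (-1) ^ r E * (-1) ^ A.card := fun A hA => by
    have := hr.mono (Finset.mem_powerset.1 hA)
    have := hr.le_card A
    have hsum : r E + A.card = (r E - r A) + (A.card - r A) + 2 * r A := by omega
    simp only [map_mul, map_pow, map_sub, constantCoeff_X, map_one, zero_sub]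
    rw [← pow_add, ← pow_add, hsum, pow_add _ _ (2 * r A), pow_mul, neg_one_sq, one_pow, mul_one]
  rw [tuttePoly, map_sum, Finset.sum_congr rfl hterm, ← Finset.mul_sum,
    Finset.sum_powerset_neg_one_pow_card_of_nonempty hE, mul_zero]


theorem degreeOf_zero_tuttePoly (hr : IsRankFunction r) (hloopless : ∀ e ∈ E, r {e} = 1) :
    degreeOf 0 (tuttePoly E r) = r E := by
  rw [tuttePoly, degreeOf_sum_X_sub_one_pow_mul (by decide) _ _ (Finset.empty_mem_powerset E),
    hr.empty, Nat.sub_zero]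
  intro A hA hA₀
  obtain ⟨e, he⟩ := Finset.nonempty_iff_ne_empty.2 hA₀
  have := hr.mono (Finset.singleton_subset_iff.2 he)
  have := hr.mono (Finset.mem_powerset.1 hA)
  have := hloopless e (Finset.mem_powerset.1 hA he)
  rw [hr.empty]
  omega

theorem degreeOf_one_tuttePoly (hr : IsRankFunction r)
    (hcoloopless : ∀ e ∈ E, r (E.erase e) = r E) :
    degreeOf 1 (tuttePoly E r) = E.card - r E := by
  simp_rw [tuttePoly, mul_comm ((X 0 - 1 : MvPolynomial (Fin 2) ℤ) ^ _)]
  refine degreeOf_sum_X_sub_one_pow_mul (by decide) _ _ (Finset.mem_powerset_self E)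
    fun A hA hAE => ?_
  obtain ⟨e, heE, heA⟩ := Finset.exists_of_ssubset
    (Finset.ssubset_iff_subset_ne.2 ⟨Finset.mem_powerset.1 hA, hAE⟩)
  have := hr.rank_add_card_le (Finset.subset_erase.2 ⟨Finset.mem_powerset.1 hA, heA⟩)
  have := hr.le_card (E.erase e)
  have := hr.le_card A
  rw [hcoloopless e heE, Finset.card_erase_of_mem heE] at *
  have := Finset.card_pos.2 ⟨e, heE⟩
  omega


theorem degreeOf_one_tuttePoly_le (hr : IsRankFunction r) :
    degreeOf 1 (tuttePoly E r) ≤ E.card - r E := by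
  refine (degreeOf_sum_le _ _ _).trans (Finset.sup_le fun A hA => ?_)
  rw [mul_comm, degreeOf_X_sub_one_pow_mul (by decide)]
  have := hr.rank_add_card_le (Finset.mem_powerset.1 hA)
  omega

theorem hyperbolaPoly_tuttePoly (hr : IsRankFunction r) :
    hyperbolaPoly (E.card - r E) (tuttePoly E r) = Polynomial.X ^ E.card := by
  apply RatFunc.algebraMap_injective ℤ
  have hX := RatFunc.X_sub_one_ne_zero (R := ℤ)
  have hx : hyperbolaEval (X 0 - 1 : MvPolynomial (Fin 2) ℤ) = RatFunc.X - 1 := by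
    simp [hyperbolaEval]
  have hy : hyperbolaEval (X 1 - 1 : MvPolynomial (Fin 2) ℤ) = (RatFunc.X - 1)⁻¹ := by
    simp [hyperbolaEval]
    field_simp
    ring
  have hbinom : (RatFunc.X : RatFunc ℤ) ^ E.card =
      ∑ A ∈ E.powerset, 1 ^ A.card * (RatFunc.X - 1) ^ (E.card - A.card) := by
    rw [Finset.sum_pow_mul_eq_add_pow, add_sub_cancel]
  rw [algebraMap_hyperbolaPoly (degreeOf_one_tuttePoly_le hr), map_pow, RatFunc.algebraMap_X,
    hbinom, tuttePoly, map_sum, Finset.mul_sum]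
  refine Finset.sum_congr rfl fun A hA => ?_
  have := hr.mono (Finset.mem_powerset.1 hA)
  have := hr.le_card A
  have := hr.le_card E
  have := Finset.card_le_card (Finset.mem_powerset.1 hA)
  rw [map_mul, map_pow, map_pow, hx, hy, one_pow, one_mul, ← mul_assoc, ← pow_add,
    show E.card - r E + (r E - r A) = (E.card - A.card) + (A.card - r A) by omega, pow_add,
    inv_pow, mul_assoc, mul_inv_cancel₀ (pow_ne_zero _ hX), mul_one]

end TuttePolynomial

section BetaInvariant

variable {α : Type} [DecidableEq α] {r : Finset α → ℕ} {E s : Finset α} {e : α}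

/-- Crapo's beta invariant: the coefficient of `x` in `T_M`. -/
noncomputable def betaInvariant (E : Finset α) (r : Finset α → ℕ) : ℤ :=
  constantCoeff (pderiv 0 (tuttePoly E r))

theorem betaInvariant_insert_of_loop (hr : IsRankFunction r) (he : e ∉ s) (hloop : r {e} = 0) :
    betaInvariant (insert e s) r = 0 := by
  simp [betaInvariant, tuttePoly_insert_of_loop hr he hloop]

theorem betaInvariant_insert_of_coloop (hr : IsRankFunction r) (he : e ∉ s)
    (hcoloop : r (insert e s) = r s + 1) :
    betaInvariant (insert e s) r = constantCoeff (tuttePoly s r) := by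
  simp [betaInvariant, tuttePoly_insert_of_coloop hr he hcoloop]

theorem betaInvariant_insert_eq_add (hr : IsRankFunction r) (he : e ∉ s)
    (hnotloop : r {e} = 1) (hnotcoloop : r (insert e s) = r s) :
    betaInvariant (insert e s) r = betaInvariant s r + betaInvariant s (contractRank r e) := by
  simp [betaInvariant, tuttePoly_insert_eq_add hr he hnotloop hnotcoloop]

theorem betaInvariant_nonneg (hr : IsRankFunction r) : 0 ≤ betaInvariant E r := by
  induction E using Finset.induction_on generalizing r with
  | empty => simp [betaInvariant]
  | insert e s he ih =>
    have := hr.rank_singleton_le e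
    have := hr.rank_insert_le e s
    have := hr.mono (Finset.subset_insert e s)
    by_cases hloop : r {e} = 0
    · rw [betaInvariant_insert_of_loop hr he hloop]
    by_cases hcoloop : r (insert e s) = r s + 1
    · rw [betaInvariant_insert_of_coloop hr he hcoloop]
      obtain rfl | hs := s.eq_empty_or_nonempty
      · simp
      · rw [constantCoeff_tuttePoly hr hs]
    rw [betaInvariant_insert_eq_add hr he (by omega) (by omega)]
    exact add_nonneg (ih hr) (ih (hr.contractRank e))

theorem MatroidConnected.one_le_betaInvariant (hc : MatroidConnected E r)
    (hr : IsRankFunction r) (hE : 2 ≤ E.card) : 1 ≤ betaInvariant E r := by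
  induction E using Finset.induction_on generalizing r with
  | empty => simp at hE
  | insert e s he ih =>
    have he' := Finset.mem_insert_self e s
    have hnotcoloop := hc.rank_erase hr hE he'
    rw [Finset.erase_insert he] at hnotcoloop
    rw [betaInvariant_insert_eq_add hr he (hc.rank_singleton hr hE he') hnotcoloop.symm]
    have hdel := betaInvariant_nonneg (E := s) hr
    have hcon := betaInvariant_nonneg (E := s) (hr.contractRank e)
    rw [Finset.card_insert_of_notMem he] at hE
    obtain hs | hs : s.card = 1 ∨ 2 ≤ s.card := by omega
    · obtain ⟨f, rfl⟩ := Finset.card_eq_one.1 hs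
      have hf := hc.rank_singleton hr (by simp [Finset.card_insert_of_notMem he])
        (Finset.mem_insert_of_mem (Finset.mem_singleton_self f))
      have hβ : betaInvariant {f} r = 1 := by
        simpa using
          betaInvariant_insert_of_coloop hr (Finset.notMem_empty f) (by simp [hf, hr.empty])
      omega
    · rcases hc.delete_or_contract hr he with h | h
      · linarith [ih h hr hs]
      · linarith [ih h (hr.contractRank e) hs]

end BetaInvariant

/-- Brylawski's theorem: the Tutte polynomial of a connected matroid (with at least two
elements) is irreducible in `ℤ[x, y]`.  Here a matroid on the finite ground set `E` is
given by its rank function `r`, satisfying the usual rank axioms. -/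
theorem tutte_irreducible_of_connected {α : Type} [DecidableEq α]
    (E : Finset α) (r : Finset α → ℕ)
    (r_empty : r ∅ = 0)
    (r_le_card : ∀ A : Finset α, r A ≤ A.card)
    (r_mono : ∀ A B : Finset α, A ⊆ B → r A ≤ r B)
    (r_submod : ∀ A B : Finset α, r (A ∪ B) + r (A ∩ B) ≤ r A + r B)
    (hcard : 2 ≤ E.card)
    (hconn : MatroidConnected E r) :
    Irreducible (tuttePoly E r) := by
  have hr : IsRankFunction r := ⟨r_empty, r_le_card, r_mono, r_submod⟩
  have hE : E.Nonempty := Finset.card_pos.1 (by omega)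
  have hhyp : hyperbolaPoly (degreeOf 1 (tuttePoly E r)) (tuttePoly E r) =
      Polynomial.X ^ (degreeOf 0 (tuttePoly E r) + degreeOf 1 (tuttePoly E r)) := by
    rw [degreeOf_zero_tuttePoly hr fun e he => hconn.rank_singleton hr hcard he,
      degreeOf_one_tuttePoly hr fun e he => hconn.rank_erase hr hcard he,
      Nat.add_sub_cancel' (hr.le_card E)]
    exact hyperbolaPoly_tuttePoly hr
  refine ⟨fun hu => ?_, fun f g hfg => ?_⟩
  · simpa [constantCoeff_tuttePoly hr hE] using hu.map constantCoeff
  · by_contra! h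
    have hf := constantCoeff_eq_zero_of_hyperbolaPoly_eq_X_pow hhyp hfg h.1
    have hg := constantCoeff_eq_zero_of_hyperbolaPoly_eq_X_pow hhyp (hfg.trans (mul_comm f g)) h.2
    have hβ : betaInvariant E r = 0 := by simp [betaInvariant, hfg, hf, hg]
    have := hconn.one_le_betaInvariant hr hcard
    omega
end
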